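/- arXiv:2308.14476 — 5 statements merged into one kernel-verified Lean document; each statement's English description precedes it below -/
import Mathlib

section
/- For every visit sequence σ of length n+1, every index k ∈ {0,…,n}, and all real start times t ≤ t′, the arrival times satisfy 0 ≤ a_k(t′) − a_k(t) ≤ t′ − t and the service-start times satisfy 0 ≤ s_k(t′) − s_k(t) ≤ t′ − t; that is, each arrival time a_k and each service-start time s_k is a nondecreasing, 1-Lipschitz function of the start time t. -/
/-- Arrival times of a visit sequence started at time `t`:
`a 0 = t`, `a (k+1) = s k + μ k + δ k` where `s k = min (max (a k) (e k)) (l k)`. -/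
noncomputable def arrive (μ e l δ : ℕ → ℝ) (t : ℝ) : ℕ → ℝ
  | 0 => t
  | k + 1 => min (max (arrive μ e l δ t k) (e k)) (l k) + μ k + δ k

/-- Service start times with time warp. -/
noncomputable def serve (μ e l δ : ℕ → ℝ) (t : ℝ) (k : ℕ) : ℝ :=
  min (max (arrive μ e l δ t k) (e k)) (l k)

/-- Total time warp of a visit sequence of length `n+1` started at time `t`. -/
noncomputable def timeWarp (n : ℕ) (μ e l δ : ℕ → ℝ) (t : ℝ) : ℝ :=
  ∑ k ∈ Finset.range (n + 1), max (arrive μ e l δ t k - l k) 0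

/-- Total waiting time of a visit sequence of length `n+1` started at time `t`. -/
noncomputable def waiting (n : ℕ) (μ e l δ : ℕ → ℝ) (t : ℝ) : ℝ :=
  ∑ k ∈ Finset.range (n + 1), max (e k - arrive μ e l δ t k) 0

/-- Duration of a visit sequence of length `n+1` started at time `t`. -/
noncomputable def duration (n : ℕ) (μ e l δ : ℕ → ℝ) (t : ℝ) : ℝ :=
  (∑ k ∈ Finset.range (n + 1), μ k) + (∑ k ∈ Finset.range n, δ k) +
    waiting n μ e l δ t

/-!
The clamp `x ↦ min (max x e) l` is monotone and 1-Lipschitz, and so are its translates.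
Since `a (k+1)` is the clamp of `a k` shifted by `μ k + δ k` and `s k` is the clamp of `a k`,
induction on `k` shows that every `a k` and `s k` is monotone and 1-Lipschitz in the start time;
for such a function `f`, `0 ≤ f t' - f t ≤ t' - t` whenever `t ≤ t'`.
-/

lemma monotone_min_max_const (e l : ℝ) : Monotone fun x : ℝ => min (max x e) l :=
  (monotone_id.max monotone_const).min monotone_const

lemma lipschitzWith_one_min_max_const (e l : ℝ) : LipschitzWith 1 fun x : ℝ => min (max x e) l :=
  (LipschitzWith.id.max_const e).min_const l

lemma LipschitzWith.add_const {α E : Type*} [PseudoMetricSpace α] [SeminormedAddCommGroup E]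
    {f : α → E} {K : NNReal} (hf : LipschitzWith K f) (c : E) :
    LipschitzWith K fun x => f x + c := by
  simpa using hf.add (LipschitzWith.const c)

lemma sub_nonneg_and_sub_le_of_monotone_of_lipschitzWith_one {f : ℝ → ℝ} (hf : Monotone f)
    (hf' : LipschitzWith 1 f) {t t' : ℝ} (ht : t ≤ t') : 0 ≤ f t' - f t ∧ f t' - f t ≤ t' - t := by
  have hdist := hf'.dist_le_mul t' t
  rw [Real.dist_eq, Real.dist_eq, abs_of_nonneg (sub_nonneg.2 (hf ht)),
    abs_of_nonneg (sub_nonneg.2 ht), NNReal.coe_one, one_mul] at hdist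
  exact ⟨sub_nonneg.2 (hf ht), hdist⟩

section
variable (μ e l δ : ℕ → ℝ)

lemma monotone_arrive (k : ℕ) : Monotone fun t => arrive μ e l δ t k := by
  induction k with
  | zero => exact monotone_id
  | succ k ih => exact (((monotone_min_max_const (e k) (l k)).comp ih).add_const _).add_const _

lemma lipschitzWith_one_arrive (k : ℕ) : LipschitzWith 1 fun t => arrive μ e l δ t k := by
  induction k with
  | zero => exact LipschitzWith.id
  | succ k ih =>
    have h := (lipschitzWith_one_min_max_const (e k) (l k)).comp ih
    rw [mul_one] at h
    exact (h.add_const _).add_const _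

lemma monotone_serve (k : ℕ) : Monotone fun t => serve μ e l δ t k :=
  (monotone_min_max_const (e k) (l k)).comp (monotone_arrive μ e l δ k)

lemma lipschitzWith_one_serve (k : ℕ) : LipschitzWith 1 fun t => serve μ e l δ t k := by
  have h := (lipschitzWith_one_min_max_const (e k) (l k)).comp (lipschitzWith_one_arrive μ e l δ k)
  rw [mul_one] at h
  exact h

end

theorem arrive_serve_monotone_lipschitz_general
    (μ e l δ : ℕ → ℝ)
    (k : ℕ) (t t' : ℝ) (ht : t ≤ t') :
    0 ≤ arrive μ e l δ t' k - arrive μ e l δ t k ∧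
    arrive μ e l δ t' k - arrive μ e l δ t k ≤ t' - t ∧
    0 ≤ serve μ e l δ t' k - serve μ e l δ t k ∧
    serve μ e l δ t' k - serve μ e l δ t k ≤ t' - t := by
  have harrive := sub_nonneg_and_sub_le_of_monotone_of_lipschitzWith_one
    (monotone_arrive μ e l δ k) (lipschitzWith_one_arrive μ e l δ k) ht
  have hserve := sub_nonneg_and_sub_le_of_monotone_of_lipschitzWith_one
    (monotone_serve μ e l δ k) (lipschitzWith_one_serve μ e l δ k) ht
  exact ⟨harrive.1, harrive.2, hserve⟩

/-- Each arrival time and each service-start time is a nondecreasing,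
1-Lipschitz function of the start time. -/
theorem arrive_serve_monotone_lipschitz
    (n : ℕ) (μ e l δ : ℕ → ℝ)
    (hμ : ∀ k ≤ n, 0 ≤ μ k) (hel : ∀ k ≤ n, e k ≤ l k) (hδ : ∀ k < n, 0 ≤ δ k)
    (k : ℕ) (hk : k ≤ n) (t t' : ℝ) (ht : t ≤ t') :
    0 ≤ arrive μ e l δ t' k - arrive μ e l δ t k ∧
    arrive μ e l δ t' k - arrive μ e l δ t k ≤ t' - t ∧
    0 ≤ serve μ e l δ t' k - serve μ e l δ t k ∧
    serve μ e l δ t' k - serve μ e l δ t k ≤ t' - t :=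
  arrive_serve_monotone_lipschitz_general μ e l δ k t t' ht
end

section
/- For every visit sequence σ of length n+1 and every real start time t, the completion time of the last visit equals the start time plus duration minus time warp: s_n(t) + μ_n = t + D_σ(t) − TW_σ(t). -/
/-! Clamping the arrival time `a_k` to `[e_k, ℓ_k]` adds the waiting time at visit `k` and removes
its time warp, and the next arrival adds `μ_k + δ_k`; summing these relations telescopes. -/

theorem min_max_eq_add_sub {α : Type*} [AddCommGroup α] [LinearOrder α] [IsOrderedAddMonoid α]
    {a e l : α} (h : e ≤ l) :
    min (max a e) l = a + max (e - a) 0 - max (a - l) 0 := by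
  rcases le_total a e with hae | hea
  · rw [max_eq_right hae, min_eq_left h, max_eq_left (sub_nonneg.2 hae),
      max_eq_right (sub_nonpos.2 (hae.trans h))]
    abel
  rcases le_total a l with hal | hla
  · rw [max_eq_left hea, min_eq_left hal, max_eq_right (sub_nonpos.2 hea),
      max_eq_right (sub_nonpos.2 hal)]
    abel
  · rw [max_eq_left hea, min_eq_right hla, max_eq_right (sub_nonpos.2 (h.trans hla)),
      max_eq_left (sub_nonneg.2 hla)]
    abel

theorem serve_eq_arrive_add_sub {μ e l δ : ℕ → ℝ} {t : ℝ} {k : ℕ} (h : e k ≤ l k) :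
    serve μ e l δ t k = arrive μ e l δ t k
      + max (e k - arrive μ e l δ t k) 0 - max (arrive μ e l δ t k - l k) 0 :=
  min_max_eq_add_sub h

theorem arrive_succ (μ e l δ : ℕ → ℝ) (t : ℝ) (k : ℕ) :
    arrive μ e l δ t (k + 1) = serve μ e l δ t k + μ k + δ k :=
  rfl

theorem serve_last_add_service_eq_general
    (n : ℕ) (μ e l δ : ℕ → ℝ)
    (hel : ∀ k ≤ n, e k ≤ l k)
    (t : ℝ) :
    serve μ e l δ t n + μ n =
      t + duration n μ e l δ t - timeWarp n μ e l δ t := by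
  induction n with
  | zero =>
    simp only [serve_eq_arrive_add_sub (hel 0 le_rfl), duration, waiting, timeWarp,
      Finset.sum_range_succ, Finset.sum_range_zero, arrive]
    ring
  | succ m ih =>
    have ih := ih fun k hk => hel k (hk.trans m.le_succ)
    simp only [duration, waiting, timeWarp] at ih ⊢
    rw [serve_eq_arrive_add_sub (hel (m + 1) le_rfl), arrive_succ,
      Finset.sum_range_succ μ (m + 1), Finset.sum_range_succ δ m,
      Finset.sum_range_succ _ (m + 1), Finset.sum_range_succ _ (m + 1), arrive_succ]
    linarith

/-- The completion time of the last visit equals the start time plus duration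
minus time warp. -/
theorem serve_last_add_service_eq
    (n : ℕ) (μ e l δ : ℕ → ℝ)
    (hμ : ∀ k ≤ n, 0 ≤ μ k) (hel : ∀ k ≤ n, e k ≤ l k) (hδ : ∀ k < n, 0 ≤ δ k)
    (t : ℝ) :
    serve μ e l δ t n + μ n =
      t + duration n μ e l δ t - timeWarp n μ e l δ t :=
  serve_last_add_service_eq_general n μ e l δ hel t
end

section
/- For every visit sequence σ and all real start times t ≤ t′, the total time warp satisfies 0 ≤ TW_σ(t′) − TW_σ(t) ≤ t′ − t; that is, TW_σ is a nondecreasing, 1-Lipschitz function of the start time. -/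
/-!
Let `Φ_m(t)` be the arrival time at visit `m` plus the time warp accumulated at visits
`0, …, m-1`. At each visit, clamping to `[e, l]` and paying `max (a - l) 0` of time warp
together move the clock from `a` to `max a (min e l)`, so
`Φ_{m+1} = Φ_m + (max a_m (min e_m l_m) - a_m) + μ_m + δ_m`. The middle term is antitone in
`a_m`, and arrival times are monotone in `t`, so `t - Φ_m(t)` is monotone by induction.
The time warp is `Φ_{n+1} - a_{n+1}`; it is monotone as a sum of monotone terms, and
`t - TW(t) = (t - Φ_{n+1}(t)) + a_{n+1}(t)` is monotone, which is the 1-Lipschitz bound.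
-/

lemma min_max_add_max_sub_zero (a e l : ℝ) :
    min (max a e) l + max (a - l) 0 = max a (min e l) := by
  rcases le_total a l with hal | hla
  · rw [max_eq_right (sub_nonpos.mpr hal), add_zero, min_max_distrib_right, min_eq_left hal]
  · rw [min_eq_right (hla.trans (le_max_left a e)), max_eq_left (sub_nonneg.mpr hla),
      max_eq_left ((min_le_right e l).trans hla)]
    ring

lemma antitone_max_const_sub_self (c : ℝ) : Antitone fun a : ℝ => max a c - a := by
  intro a b hab
  simp only [max_def]
  split_ifs <;> linarith

section

variable (μ e l δ : ℕ → ℝ)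

lemma arrive_add_warp_succ (t : ℝ) (m : ℕ) :
    arrive μ e l δ t (m + 1) + ∑ k ∈ Finset.range (m + 1), max (arrive μ e l δ t k - l k) 0 =
      arrive μ e l δ t m + ∑ k ∈ Finset.range m, max (arrive μ e l δ t k - l k) 0 +
        (max (arrive μ e l δ t m) (min (e m) (l m)) - arrive μ e l δ t m) + μ m + δ m := by
  rw [Finset.sum_range_succ, ← min_max_add_max_sub_zero, arrive]
  ring

lemma monotone_sub_arrive_add_warp (m : ℕ) :
    Monotone fun t => t - (arrive μ e l δ t m +
      ∑ k ∈ Finset.range m, max (arrive μ e l δ t k - l k) 0) := by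
  induction m with
  | zero => simp [arrive, monotone_const]
  | succ m ih =>
    intro t t' htt
    have hΦ := ih htt
    have hclamp := antitone_max_const_sub_self (min (e m) (l m)) (monotone_arrive μ e l δ m htt)
    simp only [arrive_add_warp_succ] at hΦ hclamp ⊢
    linarith

end

theorem timeWarp_monotone_lipschitz_general
    (n : ℕ) (μ e l δ : ℕ → ℝ)
    (t t' : ℝ) (ht : t ≤ t') :
    0 ≤ timeWarp n μ e l δ t' - timeWarp n μ e l δ t ∧
    timeWarp n μ e l δ t' - timeWarp n μ e l δ t ≤ t' - t := by
  have hwarp : Monotone (timeWarp n μ e l δ) := fun t t' htt =>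
    Finset.sum_le_sum fun k _ =>
      max_le_max_right 0 (sub_le_sub_right (monotone_arrive μ e l δ k htt) _)
  have hΦ := monotone_sub_arrive_add_warp μ e l δ (n + 1) ht
  have harrive := monotone_arrive μ e l δ (n + 1) ht
  refine ⟨sub_nonneg.mpr (hwarp ht), ?_⟩
  rw [timeWarp, timeWarp]
  linarith

/-- The total time warp is a nondecreasing, 1-Lipschitz function of the start time. -/
theorem timeWarp_monotone_lipschitz
    (n : ℕ) (μ e l δ : ℕ → ℝ)
    (hμ : ∀ k ≤ n, 0 ≤ μ k) (hel : ∀ k ≤ n, e k ≤ l k) (hδ : ∀ k < n, 0 ≤ δ k)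
    (t t' : ℝ) (ht : t ≤ t') :
    0 ≤ timeWarp n μ e l δ t' - timeWarp n μ e l δ t ∧
    timeWarp n μ e l δ t' - timeWarp n μ e l δ t ≤ t' - t :=
  timeWarp_monotone_lipschitz_general n μ e l δ t t' ht
end

section
/- For every visit sequence σ there exist unique real numbers D(σ) and E(σ) with D(σ) ≥ Σ_{k=0}^{n} μ_k + Σ_{k=0}^{n−1} δ_k such that for all start times t ∈ ℝ, the duration satisfies D_σ(t) = D(σ) + max{E(σ) − t, 0}; in particular, D(σ) is the minimum duration of σ, attained exactly for start times t ≥ E(σ). -/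
/-- The new kink `max (min F l) e` is the clamp of `F` to `[e, l]` when `e ≤ l`, and is `e`
otherwise. -/
lemma max_sub_add_max_sub_min_max (t F e l : ℝ) :
    max (e - t) 0 + max (F - min (max t e) l) 0
      = max (F - l) 0 + max (max (min F l) e - t) 0 := by
  simp only [max_def, min_def]
  split_ifs <;> linarith

lemma eq_and_eq_of_add_max_sub_eq {C E C' E' : ℝ}
    (h : ∀ t, C + max (E - t) 0 = C' + max (E' - t) 0) : C = C' ∧ E = E' := by
  have hC : C = C' := by
    have := h (max E E')
    rwa [max_eq_right (sub_nonpos.2 (le_max_left E E')),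
      max_eq_right (sub_nonpos.2 (le_max_right E E')), add_zero, add_zero] at this
  refine ⟨hC, ?_⟩
  have := h (min E E' - 1)
  rw [max_eq_left (by linarith [min_le_left E E']),
    max_eq_left (by linarith [min_le_right E E'])] at this
  linarith

lemma le_add_max_sub_and_eq_iff (D E t : ℝ) :
    D ≤ D + max (E - t) 0 ∧ (D + max (E - t) 0 = D ↔ E ≤ t) := by
  rw [add_eq_left, max_eq_right_iff, sub_nonpos]
  exact ⟨le_add_of_nonneg_right (le_max_right _ _), Iff.rfl⟩

lemma arrive_succ_eq_arrive_tail (μ e l δ : ℕ → ℝ) (t : ℝ) (k : ℕ) :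
    arrive μ e l δ t (k + 1)
      = arrive (fun j ↦ μ (j + 1)) (fun j ↦ e (j + 1)) (fun j ↦ l (j + 1)) (fun j ↦ δ (j + 1))
          (arrive μ e l δ t 1) k := by
  induction k with
  | zero => rfl
  | succ k ih => simp only [arrive] at ih ⊢; rw [ih]

lemma waiting_succ (n : ℕ) (μ e l δ : ℕ → ℝ) (t : ℝ) :
    waiting (n + 1) μ e l δ t
      = max (e 0 - t) 0 +
        waiting n (fun j ↦ μ (j + 1)) (fun j ↦ e (j + 1)) (fun j ↦ l (j + 1))
          (fun j ↦ δ (j + 1)) (arrive μ e l δ t 1) := by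
  rw [waiting, waiting, Finset.sum_range_succ', add_comm]
  congr 1
  exact Finset.sum_congr rfl fun k _ ↦ by rw [arrive_succ_eq_arrive_tail]

lemma exists_waiting_eq_add_max (n : ℕ) (μ e l δ : ℕ → ℝ) :
    ∃ C E : ℝ, 0 ≤ C ∧ ∀ t, waiting n μ e l δ t = C + max (E - t) 0 := by
  induction n generalizing μ e l δ with
  | zero => exact ⟨0, e 0, le_rfl, fun t ↦ by simp [waiting, arrive]⟩
  | succ n ih =>
    obtain ⟨C, E, hC, hW⟩ := ih (fun j ↦ μ (j + 1)) (fun j ↦ e (j + 1)) (fun j ↦ l (j + 1))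
      (fun j ↦ δ (j + 1))
    set F := E - (μ 0 + δ 0)
    refine ⟨C + max (F - l 0) 0, max (min F (l 0)) (e 0), by positivity, fun t ↦ ?_⟩
    have hF : E - arrive μ e l δ t 1 = F - min (max t (e 0)) (l 0) := by
      simp only [arrive, F]; ring
    rw [waiting_succ, hW, hF]
    linarith [max_sub_add_max_sub_min_max t F (e 0) (l 0)]

theorem duration_representation_general
    (n : ℕ) (μ e l δ : ℕ → ℝ) :
    (∃! p : ℝ × ℝ,
        (∑ k ∈ Finset.range (n + 1), μ k) + (∑ k ∈ Finset.range n, δ k) ≤ p.1 ∧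
        ∀ t : ℝ, duration n μ e l δ t = p.1 + max (p.2 - t) 0) ∧
    ∀ Dmin E : ℝ,
      ((∑ k ∈ Finset.range (n + 1), μ k) + (∑ k ∈ Finset.range n, δ k) ≤ Dmin ∧
        ∀ t : ℝ, duration n μ e l δ t = Dmin + max (E - t) 0) →
        ∀ t : ℝ, Dmin ≤ duration n μ e l δ t ∧
          (duration n μ e l δ t = Dmin ↔ E ≤ t) := by
  obtain ⟨C, E, hC, hW⟩ := exists_waiting_eq_add_max n μ e l δ
  set S := (∑ k ∈ Finset.range (n + 1), μ k) + (∑ k ∈ Finset.range n, δ k)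
  have hD : ∀ t, duration n μ e l δ t = S + C + max (E - t) 0 := fun t ↦ by
    rw [duration, hW, ← add_assoc]
  refine ⟨⟨(S + C, E), ⟨le_add_of_nonneg_right hC, hD⟩, ?_⟩, ?_⟩
  · rintro ⟨D', E'⟩ ⟨-, hD'⟩
    obtain ⟨rfl, rfl⟩ := eq_and_eq_of_add_max_sub_eq fun t ↦ (hD' t).symm.trans (hD t)
    rfl
  · rintro Dmin E' ⟨-, hD'⟩ t
    rw [hD']
    exact le_add_max_sub_and_eq_iff Dmin E' t

/-- There exist unique constants D(σ) ≥ Σμ + Σδ and E(σ) such that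
D_σ(t) = D(σ) + max (E(σ) - t) 0 for all t; in particular D(σ) is the minimum
duration, attained exactly for start times t ≥ E(σ). -/
theorem duration_representation
    (n : ℕ) (μ e l δ : ℕ → ℝ)
    (hμ : ∀ k ≤ n, 0 ≤ μ k) (hel : ∀ k ≤ n, e k ≤ l k) (hδ : ∀ k < n, 0 ≤ δ k) :
    (∃! p : ℝ × ℝ,
        (∑ k ∈ Finset.range (n + 1), μ k) + (∑ k ∈ Finset.range n, δ k) ≤ p.1 ∧
        ∀ t : ℝ, duration n μ e l δ t = p.1 + max (p.2 - t) 0) ∧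
    ∀ Dmin E : ℝ,
      ((∑ k ∈ Finset.range (n + 1), μ k) + (∑ k ∈ Finset.range n, δ k) ≤ Dmin ∧
        ∀ t : ℝ, duration n μ e l δ t = Dmin + max (E - t) 0) →
        ∀ t : ℝ, Dmin ≤ duration n μ e l δ t ∧
          (duration n μ e l δ t = Dmin ↔ E ≤ t) :=
  duration_representation_general n μ e l δ
end

section
/- (Proposition 1 of the paper, duration part, after Vidal et al.) Let σ and σ′ be visit sequences whose duration and time-warp functions have the representations D_σ(t) = D(σ) + max{E(σ) − t, 0}, TW_σ(t) = TW(σ) + max{t − L(σ), 0}, D_{σ′}(t) = D(σ′) + max{E(σ′) − t, 0}, TW_{σ′}(t) = TW(σ′) + max{t − L(σ′), 0} for all t ∈ ℝ, with E(σ) ≤ L(σ) and E(σ′) ≤ L(σ′). Let δ ≥ 0 be the connecting travel time, and set Δ = D(σ) − TW(σ) + δ and Δ_WT = max{E(σ′) − Δ − L(σ), 0}. Then for all t ∈ ℝ, the duration of the concatenation satisfies D_{σ⊕δ⊕σ′}(t) = D'' + max{E'' − t, 0}, where D'' = D(σ) + D(σ′) + δ + Δ_WT and E'' = max{E(σ′)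 − Δ, E(σ)} − Δ_WT. -/
/-- Visit data of the concatenation `σ ⊕ δ ⊕ σ′`: the first `m+1` visits come
from `σ` (data `f`), the remaining ones from `σ′` (data `f'`). -/
noncomputable def catV (m : ℕ) (f f' : ℕ → ℝ) (k : ℕ) : ℝ :=
  if k ≤ m then f k else f' (k - (m + 1))

/-- Travel times of the concatenation `σ ⊕ δ ⊕ σ′`: the first `m` edges come from
`σ`, the connecting edge from visit `m` to visit `m+1` has travel time `c`, and
the remaining edges come from `σ′`. -/
noncomputable def catE (m : ℕ) (δ δ' : ℕ → ℝ) (c : ℝ) (k : ℕ) : ℝ :=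
  if k < m then δ k else if k = m then c else δ' (k - (m + 1))

lemma min_max_eq_add_sub_of_le {a e l : ℝ} (h : e ≤ l) :
    min (max a e) l = a + max (e - a) 0 - max (a - l) 0 := by
  simp only [max_def, min_def]
  split_ifs <;> linarith

section Schedule

variable (μ e l δ : ℕ → ℝ) (t : ℝ)

lemma serve_add_eq_duration_sub_timeWarp (n : ℕ) (hel : ∀ k ≤ n, e k ≤ l k) :
    serve μ e l δ t n + μ n = t + duration n μ e l δ t - timeWarp n μ e l δ t := by
  induction n with
  | zero =>
    simp only [serve, arrive, duration, waiting, timeWarp, min_max_eq_add_sub_of_le (hel 0 le_rfl),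
      zero_add, Finset.range_one, Finset.sum_singleton, Finset.range_zero, Finset.sum_empty]
    ring
  | succ n ih =>
    have hstep : serve μ e l δ t (n + 1) = serve μ e l δ t n + μ n + δ n
        + max (e (n + 1) - arrive μ e l δ t (n + 1)) 0
        - max (arrive μ e l δ t (n + 1) - l (n + 1)) 0 := by
      rw [serve, min_max_eq_add_sub_of_le (hel _ le_rfl)]
      rfl
    rw [hstep, ih fun k hk => hel k (hk.trans n.le_succ)]
    simp only [duration, waiting, timeWarp, Finset.sum_range_succ _ (n + 1),
      Finset.sum_range_succ _ n]
    ring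

end Schedule

section Concatenation

variable (m : ℕ)

lemma sum_range_catV (f f' : ℕ → ℝ) (j : ℕ) :
    ∑ k ∈ Finset.range (m + 1 + j), catV m f f' k =
      ∑ k ∈ Finset.range (m + 1), f k + ∑ k ∈ Finset.range j, f' k := by
  rw [Finset.sum_range_add]
  congr 1
  · refine Finset.sum_congr rfl fun k hk => ?_
    simp [catV, Nat.lt_succ_iff.mp (Finset.mem_range.mp hk)]
  · refine Finset.sum_congr rfl fun k _ => ?_
    simp [catV, show ¬ m + 1 + k ≤ m by omega]

lemma sum_range_catE (δ δ' : ℕ → ℝ) (c : ℝ) (j : ℕ) :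
    ∑ k ∈ Finset.range (m + 1 + j), catE m δ δ' c k =
      ∑ k ∈ Finset.range m, δ k + c + ∑ k ∈ Finset.range j, δ' k := by
  rw [Finset.sum_range_add, Finset.sum_range_succ (catE m δ δ' c)]
  congr 1
  · congr 1
    · refine Finset.sum_congr rfl fun k hk => ?_
      simp [catE, Finset.mem_range.mp hk]
    · simp [catE]
  · refine Finset.sum_congr rfl fun k _ => ?_
    simp [catE, show ¬ m + 1 + k < m by omega, show m + 1 + k ≠ m by omega]

variable (μ e l δ μ' e' l' δ' : ℕ → ℝ) (c t : ℝ)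

lemma arrive_cat (k : ℕ) :
    arrive (catV m μ μ') (catV m e e') (catV m l l') (catE m δ δ' c) t k =
      catV m (arrive μ e l δ t) (arrive μ' e' l' δ' (serve μ e l δ t m + μ m + c)) k := by
  set a := arrive (catV m μ μ') (catV m e e') (catV m l l') (catE m δ δ' c) t
  have hfirst : ∀ k ≤ m, a k = arrive μ e l δ t k := by
    intro k hk
    induction k with
    | zero => rfl
    | succ k ih =>
      simp [a, arrive, ih (by omega), catV, catE, show k < m by omega, show k ≤ m by omega]
  have hsecond : ∀ j, a (m + 1 + j) = arrive μ' e' l' δ' (serve μ e l δ t m + μ m + c) j := by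
    intro j
    induction j with
    | zero => simp [a, arrive, hfirst m le_rfl, catV, catE, serve]
    | succ j ih =>
      rw [← add_assoc]
      simp only [a, arrive] at ih ⊢
      simp [ih, catV, catE, show ¬ m + 1 + j ≤ m by omega,
        show ¬ m + 1 + j < m by omega, show m + 1 + j ≠ m by omega]
  unfold catV
  split_ifs with hk
  · exact hfirst k hk
  · obtain ⟨j, rfl⟩ := Nat.exists_eq_add_of_lt (not_le.mp hk)
    simpa [add_right_comm] using hsecond j

lemma duration_cat (n : ℕ) :
    duration (m + n + 1) (catV m μ μ') (catV m e e') (catV m l l') (catE m δ δ' c) t =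
      duration m μ e l δ t + c +
        duration n μ' e' l' δ' (serve μ e l δ t m + μ m + c) := by
  have hwait : ∀ k, max (catV m e e' k -
        arrive (catV m μ μ') (catV m e e') (catV m l l') (catE m δ δ' c) t k) 0 =
      catV m (fun k => max (e k - arrive μ e l δ t k) 0)
        (fun k => max (e' k - arrive μ' e' l' δ' (serve μ e l δ t m + μ m + c) k) 0) k := by
    intro k
    rw [arrive_cat]
    unfold catV
    split_ifs <;> rfl
  simp only [duration, waiting, hwait]
  rw [show m + n + 1 + 1 = m + 1 + (n + 1) by omega, show m + n + 1 = m + 1 + n by omega,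
    sum_range_catV, sum_range_catV, sum_range_catE]
  ring

end Concatenation

lemma max_sub_add_max_sub_eq (A L B t : ℝ) (h : A ≤ L) :
    max (A - t) 0 + max (B - t - max (A - t) 0 + max (t - L) 0) 0 =
      max (B - L) 0 + max (max B A - max (B - L) 0 - t) 0 := by
  simp only [max_def]
  split_ifs <;> linarith

theorem concat_duration_representation_general
    (m n : ℕ) (μ e l δ μ' e' l' δ' : ℕ → ℝ) (c : ℝ)
    (hel : ∀ k ≤ m, e k ≤ l k)
    (Dσ TWσ Eσ Lσ Dσ' Eσ' : ℝ)
    (hDσ : ∀ t : ℝ, duration m μ e l δ t = Dσ + max (Eσ - t) 0)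
    (hTWσ : ∀ t : ℝ, timeWarp m μ e l δ t = TWσ + max (t - Lσ) 0)
    (hDσ' : ∀ t : ℝ, duration n μ' e' l' δ' t = Dσ' + max (Eσ' - t) 0)
    (hEL : Eσ ≤ Lσ)
    (Δ ΔWT D'' E'' : ℝ)
    (hΔ : Δ = Dσ - TWσ + c)
    (hΔWT : ΔWT = max (Eσ' - Δ - Lσ) 0)
    (hD'' : D'' = Dσ + Dσ' + c + ΔWT)
    (hE'' : E'' = max (Eσ' - Δ) Eσ - ΔWT) :
    ∀ t : ℝ,
      duration (m + n + 1) (catV m μ μ') (catV m e e') (catV m l l')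
          (catE m δ δ' c) t =
        D'' + max (E'' - t) 0 := by
  intro t
  have hstart : Eσ' - (serve μ e l δ t m + μ m + c) =
      Eσ' - Δ - t - max (Eσ - t) 0 + max (t - Lσ) 0 := by
    rw [serve_add_eq_duration_sub_timeWarp μ e l δ t m hel, hDσ, hTWσ, hΔ]
    ring
  rw [duration_cat, hDσ, hDσ', hstart, hD'', hE'', hΔWT]
  linarith [max_sub_add_max_sub_eq Eσ Lσ (Eσ' - Δ) t hEL]

/-- Proposition 1 (duration part): with Δ = D(σ) - TW(σ) + δ and
Δ_WT = max (E(σ′) - Δ - L(σ)) 0, the duration of the concatenation satisfies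
D(t) = D'' + max (E'' - t) 0 where D'' = D(σ) + D(σ′) + δ + Δ_WT and
E'' = max (E(σ′) - Δ) (E(σ)) - Δ_WT. -/
theorem concat_duration_representation
    (m n : ℕ) (μ e l δ μ' e' l' δ' : ℕ → ℝ) (c : ℝ)
    (hμ : ∀ k ≤ m, 0 ≤ μ k) (hel : ∀ k ≤ m, e k ≤ l k) (hδ : ∀ k < m, 0 ≤ δ k)
    (hμ' : ∀ k ≤ n, 0 ≤ μ' k) (hel' : ∀ k ≤ n, e' k ≤ l' k)
    (hδ' : ∀ k < n, 0 ≤ δ' k) (hc : 0 ≤ c)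
    (Dσ TWσ Eσ Lσ Dσ' TWσ' Eσ' Lσ' : ℝ)
    (hDσ : ∀ t : ℝ, duration m μ e l δ t = Dσ + max (Eσ - t) 0)
    (hTWσ : ∀ t : ℝ, timeWarp m μ e l δ t = TWσ + max (t - Lσ) 0)
    (hDσ' : ∀ t : ℝ, duration n μ' e' l' δ' t = Dσ' + max (Eσ' - t) 0)
    (hTWσ' : ∀ t : ℝ, timeWarp n μ' e' l' δ' t = TWσ' + max (t - Lσ') 0)
    (hEL : Eσ ≤ Lσ) (hEL' : Eσ' ≤ Lσ')
    (Δ ΔWT D'' E'' : ℝ)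
    (hΔ : Δ = Dσ - TWσ + c)
    (hΔWT : ΔWT = max (Eσ' - Δ - Lσ) 0)
    (hD'' : D'' = Dσ + Dσ' + c + ΔWT)
    (hE'' : E'' = max (Eσ' - Δ) Eσ - ΔWT) :
    ∀ t : ℝ,
      duration (m + n + 1) (catV m μ μ') (catV m e e') (catV m l l')
          (catE m δ δ' c) t =
        D'' + max (E'' - t) 0 :=
  concat_duration_representation_general m n μ e l δ μ' e' l' δ' c hel Dσ TWσ Eσ Lσ Dσ' Eσ' hDσ hTWσ
    hDσ' hEL Δ ΔWT D'' E'' hΔ hΔWT hD'' hE''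
end
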